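/- Let N=2n, M=2m, A ∈ ℂ^{N×M} with centered 2D DFT â, and suppose only the odd-indexed rows â_{2ν1+1,ν2} (ν1 = -n/2,...,n/2-1, ν2 = -m,...,m-1) are known. Let W = (w_{ν1,ν2}) ∈ ℂ^{n×M} be an arbitrary weight matrix, extended periodically with periods n and M, and define the interpolated Fourier data by ã̂_{2ν1+1,ν2} := â_{2ν1+1,ν2} and ã̂_{2ν1,ν2} := Σ_{ℓ1=-n/2}^{n/2-1} Σ_{ℓ2=-m}^{m-1} w_{ν1-ℓ1,ν2-ℓ2} â_{2ℓ1+1,ℓ2}. Let Ã be the inverse 2D DFT of ã̂ and let w̌_{k1,k2} = Σ_{ν1=-n/2}^{n/2-1} Σ_{ν2=-m}^{m-1} w_{ν1,ν2} ω_N^{-2k1ν1} ω_M^{-k2ν2}. Then for all k1 ∈ {0,...,n-1} and k2 ∈ {-m,...,m-1}: ã_{k1,k2} = (1/2)(1 + w̌_{k1,k2} ω_N^{k1})(a_{k1,k2} - a_{k1-n,k2}). In particular, no such local interpolation scheme can recover any information about a_{k1,k2} + a_{k1-n,k2}. -/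

import Mathlib

open Finset

/-- `omegaRoot N = e^{-2πi/N}` -/
noncomputable def omegaRoot (N : ℤ) : ℂ :=
  Complex.exp (-2 * Real.pi * Complex.I / N)

lemma omegaRoot_zpow (N d : ℤ) :
    omegaRoot N ^ d = Complex.exp (d * (-2 * Real.pi * Complex.I / N)) := by
  rw [omegaRoot, ← Complex.exp_int_mul]

lemma omegaRoot_ne_zero (N : ℤ) : omegaRoot N ≠ 0 := Complex.exp_ne_zero _

lemma omegaRoot_zpow_eq_one_iff {N : ℤ} (hN : N ≠ 0) (d : ℤ) :
    omegaRoot N ^ d = 1 ↔ N ∣ d := by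
  rw [omegaRoot_zpow, Complex.exp_eq_one_iff]
  have hπ : (Real.pi : ℂ) ≠ 0 := by exact_mod_cast Real.pi_ne_zero
  have hNc : (N : ℂ) ≠ 0 := by exact_mod_cast hN
  constructor
  · rintro ⟨k, hk⟩
    refine ⟨-k, ?_⟩
    have h2πI : (2 * (Real.pi:ℂ) * Complex.I) ≠ 0 := by
      simp [hπ, Complex.I_ne_zero]
    field_simp at hk
    have h2 : (d : ℂ) * (2 * Real.pi * Complex.I)
        = ((N * (-k) : ℤ) : ℂ) * (2 * Real.pi * Complex.I) := by
      push_cast; linear_combination (-(2 * (Real.pi:ℂ) * Complex.I)) * hk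
    exact_mod_cast mul_right_cancel₀ h2πI h2
  · rintro ⟨t, rfl⟩
    exact ⟨-t, by push_cast; field_simp⟩

lemma sum_Icc_shift (g : ℤ → ℂ) (a b t : ℤ) :
    ∑ x ∈ Finset.Icc (a + t) (b + t), g x = ∑ x ∈ Finset.Icc a b, g (x + t) := by
  rw [← Finset.map_add_right_Icc, Finset.sum_map]
  rfl

lemma sum_Icc_period (g : ℤ → ℂ) (p : ℤ) (hp : 0 < p)
    (hg : ∀ x, g (x + p) = g x) (a b : ℤ) :
    ∑ x ∈ Finset.Icc a (a + p - 1), g x = ∑ x ∈ Finset.Icc b (b + p - 1), g x := by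
  have step : ∀ c : ℤ, ∑ x ∈ Finset.Icc c (c + p - 1), g x
      = ∑ x ∈ Finset.Icc (c + 1) (c + 1 + p - 1), g x := by
    intro c
    have h1 : Finset.Icc c (c + p - 1) = insert c (Finset.Icc (c + 1) (c + p - 1)) := by
      ext x; simp only [Finset.mem_insert, Finset.mem_Icc]; omega
    have h2 : Finset.Icc (c + 1) (c + 1 + p - 1)
        = insert (c + p) (Finset.Icc (c + 1) (c + p - 1)) := by
      ext x; simp only [Finset.mem_insert, Finset.mem_Icc]; omega
    rw [h1, h2, Finset.sum_insert (by simp), Finset.sum_insert (by simp)]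
    rw [hg c]
  have key : ∀ j : ℤ, ∑ x ∈ Finset.Icc (a + j) (a + j + p - 1), g x
      = ∑ x ∈ Finset.Icc a (a + p - 1), g x := by
    intro j
    induction j using Int.induction_on with
    | zero => simp
    | succ j ih => rw [show a + (j + 1 : ℤ) = (a + j) + 1 by ring, ← step (a + j)]; exact ih
    | pred j ih =>
        rw [step (a + (-(j:ℤ) - 1))]
        rw [show a + (-(j:ℤ) - 1) + 1 = a + -(j:ℤ) by ring]
        exact ih
  have := key (b - a)
  rw [show a + (b - a) = b by ring] at this
  exact this.symm

lemma sum_zpow_Icc (z : ℂ) (L : ℤ) (hL : 0 < L) (hz : z ^ L = 1) (a : ℤ) :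
    ∑ x ∈ Finset.Icc a (a + L - 1), z ^ x = if z = 1 then (L : ℂ) else 0 := by
  have hz0 : z ≠ 0 := by
    intro h; rw [h, zero_zpow _ hL.ne'] at hz; exact one_ne_zero hz.symm
  split_ifs with h1
  · subst h1
    simp only [one_zpow, Finset.sum_const, nsmul_eq_mul, mul_one]
    rw [Int.card_Icc]
    have : (a + L - 1 + 1 - a) = L := by ring
    rw [this]
    exact_mod_cast Int.toNat_of_nonneg hL.le
  · have hper : ∀ x, z ^ (x + L) = z ^ x := fun x => by
      rw [zpow_add₀ hz0, hz, mul_one]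
    rw [sum_Icc_period _ L hL hper a 0]
    have hre : ∑ x ∈ Finset.Icc (0:ℤ) (0 + L - 1), z ^ x
        = ∑ i ∈ Finset.range L.toNat, z ^ (i : ℕ) := by
      refine Finset.sum_nbij' (fun x => x.toNat) (fun i => (i : ℤ)) ?_ ?_ ?_ ?_ ?_
      · intro x hx; simp only [Finset.mem_Icc] at hx; simp only [Finset.mem_range]; omega
      · intro i hi; simp only [Finset.mem_range] at hi; simp only [Finset.mem_Icc]; omega
      · intro x hx; simp only [Finset.mem_Icc] at hx; show ((x.toNat : ℤ)) = x; omega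
      · intro i hi; show ((i:ℤ)).toNat = i; omega
      · intro x hx; simp only [Finset.mem_Icc] at hx
        have hx' : ((x.toNat : ℤ)) = x := by omega
        show z ^ x = z ^ (x.toNat : ℕ)
        rw [← zpow_natCast, hx']
    rw [hre, geom_sum_eq h1 _]
    have : z ^ L.toNat = 1 := by
      rw [← zpow_natCast, Int.toNat_of_nonneg hL.le, hz]
    rw [this]
    simp

lemma sum_even_odd (n : ℤ) (hn2 : 2 * (n / 2) = n) (f : ℤ → ℂ) :
    ∑ ν ∈ Finset.Icc (-n) (n - 1), f ν =
      (∑ μ ∈ Finset.Icc (-(n / 2)) (n / 2 - 1), f (2 * μ)) +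
      (∑ μ ∈ Finset.Icc (-(n / 2)) (n / 2 - 1), f (2 * μ + 1)) := by
  have key : Finset.Icc (-n) (n - 1) =
      (Finset.Icc (-(n / 2)) (n / 2 - 1)).image (fun μ => 2 * μ)
        ∪ (Finset.Icc (-(n / 2)) (n / 2 - 1)).image (fun μ => 2 * μ + 1) := by
    ext x
    simp only [Finset.mem_union, Finset.mem_image, Finset.mem_Icc]
    constructor
    · intro hx
      rcases Int.even_or_odd x with ⟨μ, hμ⟩ | ⟨μ, hμ⟩
      · exact Or.inl ⟨μ, by omega, by omega⟩
      · exact Or.inr ⟨μ, by omega, by omega⟩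
    · rintro (⟨μ, hμ, rfl⟩ | ⟨μ, hμ, rfl⟩) <;> omega
  rw [key, Finset.sum_union, Finset.sum_image (by intros a _ b _ h; simp only at h; omega),
      Finset.sum_image (by intros a _ b _ h; simp only at h; omega)]
  rw [Finset.disjoint_left]
  rintro x hx hx'
  simp only [Finset.mem_image, Finset.mem_Icc] at hx hx'
  obtain ⟨μ, _, rfl⟩ := hx
  obtain ⟨μ', _, h⟩ := hx'
  omega

lemma omegaRoot_neg_half (n : ℤ) (hn : 0 < n) : omegaRoot (2 * n) ^ (-n : ℤ) = -1 := by
  have hnc : (n : ℂ) ≠ 0 := by exact_mod_cast hn.ne'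
  have harg : ((-n : ℤ) : ℂ) * (-2 * Real.pi * Complex.I / ((2 * n : ℤ) : ℂ))
      = Real.pi * Complex.I := by
    push_cast
    field_simp
  rw [omegaRoot_zpow, harg, Complex.exp_pi_mul_I]

lemma char_sum (M : ℤ) (hM : 0 < M) (d a : ℤ) :
    ∑ x ∈ Finset.Icc a (a + M - 1), omegaRoot M ^ (d * x) =
      if M ∣ d then (M : ℂ) else 0 := by
  have h1 : ∀ x : ℤ, omegaRoot M ^ (d * x) = (omegaRoot M ^ d) ^ x := fun x => zpow_mul _ d x
  simp only [h1]
  have hz : (omegaRoot M ^ d) ^ (M : ℤ) = 1 := by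
    rw [← zpow_mul, mul_comm, zpow_mul,
      (omegaRoot_zpow_eq_one_iff hM.ne' M).2 dvd_rfl, one_zpow]
  rw [sum_zpow_Icc _ M hM hz a]
  simp only [omegaRoot_zpow_eq_one_iff hM.ne' d]

lemma sum_swap4 {α : Type*} (s t u v : Finset α) (f : α → α → α → α → ℂ) :
    (∑ x ∈ s, ∑ y ∈ t, ∑ z ∈ u, ∑ p ∈ v, f x y z p)
      = ∑ z ∈ u, ∑ p ∈ v, ∑ x ∈ s, ∑ y ∈ t, f x y z p := by
  calc (∑ x ∈ s, ∑ y ∈ t, ∑ z ∈ u, ∑ p ∈ v, f x y z p)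
      = ∑ x ∈ s, ∑ z ∈ u, ∑ y ∈ t, ∑ p ∈ v, f x y z p :=
        Finset.sum_congr rfl fun x _ => Finset.sum_comm
    _ = ∑ z ∈ u, ∑ x ∈ s, ∑ y ∈ t, ∑ p ∈ v, f x y z p := Finset.sum_comm
    _ = ∑ z ∈ u, ∑ x ∈ s, ∑ p ∈ v, ∑ y ∈ t, f x y z p :=
        Finset.sum_congr rfl fun z _ => Finset.sum_congr rfl fun x _ => Finset.sum_comm
    _ = ∑ z ∈ u, ∑ p ∈ v, ∑ x ∈ s, ∑ y ∈ t, f x y z p :=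
        Finset.sum_congr rfl fun z _ => Finset.sum_comm

lemma sum_Icc_sub (g : ℤ → ℂ) (a b t : ℤ) :
    ∑ x ∈ Finset.Icc a b, g (x - t) = ∑ x ∈ Finset.Icc (a - t) (b - t), g x := by
  have h := sum_Icc_shift g a b (-t)
  simp only [← sub_eq_add_neg] at h
  exact h.symm

lemma sum2_shift_period (G : ℤ → ℤ → ℂ) (n m : ℤ) (hn : 0 < n) (hm : 0 < m)
    (hn2 : 2 * (n / 2) = n)
    (hG1 : ∀ x y, G (x + n) y = G x y) (hG2 : ∀ x y, G x (y + 2 * m) = G x y) (l1 l2 : ℤ) :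
    ∑ μ ∈ Finset.Icc (-(n / 2)) (n / 2 - 1), ∑ ν ∈ Finset.Icc (-m) (m - 1),
        G (μ - l1) (ν - l2)
      = ∑ μ ∈ Finset.Icc (-(n / 2)) (n / 2 - 1), ∑ ν ∈ Finset.Icc (-m) (m - 1), G μ ν := by
  have inner : ∀ x : ℤ, ∑ ν ∈ Finset.Icc (-m) (m - 1), G x (ν - l2)
      = ∑ ν ∈ Finset.Icc (-m) (m - 1), G x ν := by
    intro x
    rw [sum_Icc_sub (fun y => G x y) (-m) (m - 1) l2]
    have h2 := sum_Icc_period (fun y => G x y) (2 * m) (by omega) (fun y => hG2 x y)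
      (-m - l2) (-m)
    rw [show -m - l2 + 2 * m - 1 = m - 1 - l2 by ring, show -m + 2 * m - 1 = m - 1 by ring] at h2
    exact h2
  calc ∑ μ ∈ Finset.Icc (-(n / 2)) (n / 2 - 1), ∑ ν ∈ Finset.Icc (-m) (m - 1),
          G (μ - l1) (ν - l2)
      = ∑ μ ∈ Finset.Icc (-(n / 2)) (n / 2 - 1),
          ∑ ν ∈ Finset.Icc (-m) (m - 1), G (μ - l1) ν :=
        Finset.sum_congr rfl fun μ _ => inner (μ - l1)
    _ = ∑ μ ∈ Finset.Icc (-(n / 2)) (n / 2 - 1), ∑ ν ∈ Finset.Icc (-m) (m - 1), G μ ν := by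
        rw [sum_Icc_sub (fun x => ∑ ν ∈ Finset.Icc (-m) (m - 1), G x ν) (-(n / 2))
          (n / 2 - 1) l1]
        have h1 := sum_Icc_period (fun x => ∑ ν ∈ Finset.Icc (-m) (m - 1), G x ν) n hn
          (fun x => Finset.sum_congr rfl fun ν _ => hG1 x ν) (-(n / 2) - l1) (-(n / 2))
        rw [show -(n / 2) - l1 + n - 1 = n / 2 - 1 - l1 by omega,
            show -(n / 2) + n - 1 = n / 2 - 1 by omega] at h1
        exact h1

lemma odd_eval (n m : ℤ) (hn : 0 < n) (hm : 0 < m) (hn2 : 2 * (n / 2) = n)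
    (a ahat : ℤ → ℤ → ℂ)
    (hhat : ∀ ν1 ν2 : ℤ, ahat ν1 ν2 =
      (1 / Real.sqrt ((2 * m) * (2 * n)) : ℝ) *
        ∑ k1 ∈ Finset.Icc (-n) (n - 1), ∑ k2 ∈ Finset.Icc (-m) (m - 1),
          a k1 k2 * omegaRoot (2 * n) ^ (k1 * ν1) * omegaRoot (2 * m) ^ (k2 * ν2))
    (k1 k2 : ℤ) (hk1 : 0 ≤ k1 ∧ k1 ≤ n - 1) (hk2 : -m ≤ k2 ∧ k2 ≤ m - 1) :
    ((1 / Real.sqrt ((2 * m) * (2 * n)) : ℝ) : ℂ) *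
      ∑ l1 ∈ Finset.Icc (-(n / 2)) (n / 2 - 1), ∑ l2 ∈ Finset.Icc (-m) (m - 1),
        ahat (2 * l1 + 1) l2 * omegaRoot (2 * n) ^ (-(k1 * (2 * l1 + 1)))
          * omegaRoot (2 * m) ^ (-(k2 * l2))
      = (1 / 2 : ℂ) * (a k1 k2 - a (k1 - n) k2) := by
  have hωN : omegaRoot (2 * n) ≠ 0 := omegaRoot_ne_zero _
  have hωM : omegaRoot (2 * m) ≠ 0 := omegaRoot_ne_zero _
  set c : ℂ := ((1 / Real.sqrt ((2 * m) * (2 * n)) : ℝ) : ℂ) with hc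
  set I := Finset.Icc (-(n / 2)) (n / 2 - 1) with hI
  set J := Finset.Icc (-m) (m - 1) with hJ
  set K := Finset.Icc (-n) (n - 1) with hK
  -- step 1 : pointwise expansion
  have point : ∀ l1 ∈ I, ∀ l2 ∈ J,
      ahat (2 * l1 + 1) l2 * omegaRoot (2 * n) ^ (-(k1 * (2 * l1 + 1)))
          * omegaRoot (2 * m) ^ (-(k2 * l2))
        = c * ∑ j1 ∈ K, ∑ j2 ∈ J, a j1 j2 * omegaRoot (2 * n) ^ ((j1 - k1) * (2 * l1 + 1))
            * omegaRoot (2 * m) ^ ((j2 - k2) * l2) := by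
    intro l1 _ l2 _
    rw [hhat]
    simp only [Finset.sum_mul, Finset.mul_sum]
    refine Finset.sum_congr rfl fun j1 _ => Finset.sum_congr rfl fun j2 _ => ?_
    rw [show (j1 - k1) * (2 * l1 + 1) = j1 * (2 * l1 + 1) + -(k1 * (2 * l1 + 1)) by ring,
        show (j2 - k2) * l2 = j2 * l2 + -(k2 * l2) by ring,
        zpow_add₀ hωN, zpow_add₀ hωM]
    ring
  rw [Finset.sum_congr rfl (fun l1 h1 => Finset.sum_congr rfl (fun l2 h2 => point l1 h1 l2 h2))]
  simp only [← Finset.mul_sum]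
  rw [sum_swap4 I J K J (fun l1 l2 j1 j2 =>
    a j1 j2 * omegaRoot (2 * n) ^ ((j1 - k1) * (2 * l1 + 1))
      * omegaRoot (2 * m) ^ ((j2 - k2) * l2))]
  -- factor the inner double sum
  have fact : ∀ j1 ∈ K, ∀ j2 ∈ J,
      (∑ l1 ∈ I, ∑ l2 ∈ J, a j1 j2 * omegaRoot (2 * n) ^ ((j1 - k1) * (2 * l1 + 1))
          * omegaRoot (2 * m) ^ ((j2 - k2) * l2))
        = a j1 j2 * (∑ l1 ∈ I, omegaRoot (2 * n) ^ ((j1 - k1) * (2 * l1 + 1)))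
            * (∑ l2 ∈ J, omegaRoot (2 * m) ^ ((j2 - k2) * l2)) := by
    intro j1 _ j2 _
    rw [mul_assoc, Finset.sum_mul_sum]
    simp only [Finset.mul_sum]
    exact Finset.sum_congr rfl fun l1 _ => Finset.sum_congr rfl fun l2 _ => by ring
  rw [Finset.sum_congr rfl (fun j1 h1 => Finset.sum_congr rfl (fun j2 h2 => fact j1 h1 j2 h2))]
  -- evaluate the l2-sum
  have hS2 : ∀ j2 ∈ J, (∑ l2 ∈ J, omegaRoot (2 * m) ^ ((j2 - k2) * l2))
      = if j2 = k2 then ((2 * m : ℤ) : ℂ) else 0 := by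
    intro j2 hj2
    rw [hJ] at hj2 ⊢
    simp only [Finset.mem_Icc] at hj2
    rw [show Finset.Icc (-m) (m - 1) = Finset.Icc (-m) (-m + 2 * m - 1) by congr 1; ring,
        char_sum (2 * m) (by omega) (j2 - k2) (-m)]
    by_cases h : j2 = k2
    · subst h; rw [if_pos ⟨0, by ring⟩, if_pos rfl]
    · rw [if_neg h, if_neg]
      rintro ⟨t, ht⟩
      have e : j2 - k2 = 2 * (m * t) := by linarith
      have hb1 : m * t < m * 1 := by linarith
      have hb2 : m * (-1) < m * t := by linarith
      have t1 : t < 1 := lt_of_mul_lt_mul_left hb1 hm.le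
      have t2 : -1 < t := lt_of_mul_lt_mul_left hb2 hm.le
      have : t = 0 := by omega
      subst this
      simp at e
      omega
  -- evaluate the l1-sum
  have hS1 : ∀ j1 ∈ K, (∑ l1 ∈ I, omegaRoot (2 * n) ^ ((j1 - k1) * (2 * l1 + 1)))
      = if j1 = k1 then (n : ℂ) else if j1 = k1 - n then -(n : ℂ) else 0 := by
    intro j1 hj1
    rw [hK] at hj1
    simp only [Finset.mem_Icc] at hj1
    have exp_split : ∀ l1 : ℤ, omegaRoot (2 * n) ^ ((j1 - k1) * (2 * l1 + 1))
        = (omegaRoot (2 * n) ^ (2 * (j1 - k1))) ^ l1 * omegaRoot (2 * n) ^ (j1 - k1) := by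
      intro l1
      rw [← zpow_mul, ← zpow_add₀ hωN]
      congr 1
      ring
    simp only [exp_split]
    rw [← Finset.sum_mul, hI,
        show Finset.Icc (-(n / 2)) (n / 2 - 1) = Finset.Icc (-(n / 2)) (-(n / 2) + n - 1)
          by congr 1; omega,
        sum_zpow_Icc (omegaRoot (2 * n) ^ (2 * (j1 - k1))) n hn
          (by rw [← zpow_mul]
              exact (omegaRoot_zpow_eq_one_iff (by omega) _).2 ⟨j1 - k1, by ring⟩) (-(n / 2))]
    simp only [omegaRoot_zpow_eq_one_iff (show (2 * n : ℤ) ≠ 0 by omega)]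
    by_cases h : j1 = k1
    · subst h
      rw [if_pos ⟨0, by ring⟩, if_pos rfl]
      simp
    · by_cases h' : j1 = k1 - n
      · subst h'
        rw [if_pos ⟨-1, by ring⟩, if_neg (by omega), if_pos rfl,
            show k1 - n - k1 = -n by ring, omegaRoot_neg_half n hn]
        ring
      · rw [if_neg, if_neg h, if_neg h']
        · ring
        rintro ⟨t, ht⟩
        have e : j1 - k1 = n * t := by linarith
        have hb1 : n * t < n * 1 := by linarith
        have hb2 : n * (-2) < n * t := by linarith
        have t1 : t < 1 := lt_of_mul_lt_mul_left hb1 hn.le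
        have t2 : -2 < t := lt_of_mul_lt_mul_left hb2 hn.le
        have ht0 : t = 0 ∨ t = -1 := by omega
        rcases ht0 with rfl | rfl
        · simp at e; omega
        · simp at e; omega
  rw [Finset.sum_congr rfl (fun j1 h1 => Finset.sum_congr rfl (fun j2 h2 => by
    rw [hS1 j1 h1, hS2 j2 h2]))]
  have hk2J : k2 ∈ J := by rw [hJ]; simp only [Finset.mem_Icc]; omega
  have collapse2 : ∀ j1 ∈ K,
      (∑ j2 ∈ J, a j1 j2 * (if j1 = k1 then (n : ℂ) else if j1 = k1 - n then -(n : ℂ) else 0)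
          * (if j2 = k2 then ((2 * m : ℤ) : ℂ) else 0))
        = a j1 k2 * (if j1 = k1 then (n : ℂ) else if j1 = k1 - n then -(n : ℂ) else 0)
            * ((2 * m : ℤ) : ℂ) := by
    intro j1 _
    rw [Finset.sum_congr rfl (fun j2 _ => by rw [mul_ite, mul_zero]),
        Finset.sum_ite_eq' J k2
          (fun j2 => a j1 j2 * (if j1 = k1 then (n : ℂ) else if j1 = k1 - n then -(n : ℂ) else 0)
            * ((2 * m : ℤ) : ℂ)), if_pos hk2J]
  rw [Finset.sum_congr rfl collapse2]
  have pair_sub : ({k1, k1 - n} : Finset ℤ) ⊆ K := by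
    intro x hx
    simp only [Finset.mem_insert, Finset.mem_singleton] at hx
    rw [hK]; simp only [Finset.mem_Icc]
    rcases hx with rfl | rfl <;> omega
  rw [← Finset.sum_subset pair_sub (fun x _ hx' => by
    simp only [Finset.mem_insert, Finset.mem_singleton] at hx'
    push_neg at hx'
    rw [if_neg hx'.1, if_neg hx'.2]
    ring)]
  rw [Finset.sum_pair (show k1 ≠ k1 - n by omega), if_pos rfl,
      if_neg (show ¬ (k1 - n = k1) by omega), if_pos rfl]
  have hmr : (0 : ℝ) < (m : ℝ) := by exact_mod_cast hm
  have hnr : (0 : ℝ) < (n : ℝ) := by exact_mod_cast hn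
  have hcc : c * c = (((2 * (m : ℝ)) * (2 * (n : ℝ)))⁻¹ : ℝ) := by
    rw [hc, ← Complex.ofReal_mul]
    congr 1
    rw [div_mul_div_comm, one_mul, Real.mul_self_sqrt (by nlinarith), one_div]
  rw [← mul_assoc, hcc]
  have hm0 : ((m : ℤ) : ℂ) ≠ 0 := by exact_mod_cast hm.ne'
  have hn0 : ((n : ℤ) : ℂ) ≠ 0 := by exact_mod_cast hn.ne'
  push_cast
  field_simp
  ring

/-- any local interpolation of the even-indexed rows of the centered 2D DFT
from the odd-indexed rows with a (periodically extended) weight matrix `w` yields a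
reconstruction `atil` with
`atil k1 k2 = (1/2)(1 + w̌_{k1,k2} ω_N^{k1})(a k1 k2 - a (k1-n) k2)`,
so no information about `a k1 k2 + a (k1-n) k2` can be recovered. -/
theorem interpolation_from_odd_rows
    (n m : ℤ) (hn : 0 < n) (hm : 0 < m) (hne : Even n)
    (a ahat : ℤ → ℤ → ℂ)
    (hhat : ∀ ν1 ν2 : ℤ, ahat ν1 ν2 =
      (1 / Real.sqrt ((2 * m) * (2 * n)) : ℝ) *
        ∑ k1 ∈ Finset.Icc (-n) (n - 1), ∑ k2 ∈ Finset.Icc (-m) (m - 1),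
          a k1 k2 * omegaRoot (2 * n) ^ (k1 * ν1) * omegaRoot (2 * m) ^ (k2 * ν2))
    (w : ℤ → ℤ → ℂ)
    (hper : ∀ ν1 ν2 ℓ1 ℓ2 : ℤ, w (ν1 + ℓ1 * n) (ν2 + ℓ2 * (2 * m)) = w ν1 ν2)
    (atilhat : ℤ → ℤ → ℂ)
    (hodd : ∀ ν1 ν2 : ℤ, atilhat (2 * ν1 + 1) ν2 = ahat (2 * ν1 + 1) ν2)
    (heven : ∀ ν1 ν2 : ℤ, atilhat (2 * ν1) ν2 =
      ∑ ℓ1 ∈ Finset.Icc (-(n / 2)) (n / 2 - 1), ∑ ℓ2 ∈ Finset.Icc (-m) (m - 1),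
        w (ν1 - ℓ1) (ν2 - ℓ2) * ahat (2 * ℓ1 + 1) ℓ2)
    (atil : ℤ → ℤ → ℂ)
    (hinv : ∀ k1 k2 : ℤ, atil k1 k2 =
      (1 / Real.sqrt ((2 * m) * (2 * n)) : ℝ) *
        ∑ ν1 ∈ Finset.Icc (-n) (n - 1), ∑ ν2 ∈ Finset.Icc (-m) (m - 1),
          atilhat ν1 ν2 * omegaRoot (2 * n) ^ (-(k1 * ν1)) * omegaRoot (2 * m) ^ (-(k2 * ν2)))
    (wcheck : ℤ → ℤ → ℂ)
    (hwcheck : ∀ k1 k2 : ℤ, wcheck k1 k2 =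
      ∑ ν1 ∈ Finset.Icc (-(n / 2)) (n / 2 - 1), ∑ ν2 ∈ Finset.Icc (-m) (m - 1),
        w ν1 ν2 * omegaRoot (2 * n) ^ (-(2 * k1 * ν1)) * omegaRoot (2 * m) ^ (-(k2 * ν2))) :
    ∀ k1 ∈ Finset.Icc (0 : ℤ) (n - 1), ∀ k2 ∈ Finset.Icc (-m) (m - 1),
      atil k1 k2 =
        (1 / 2 : ℂ) * (1 + wcheck k1 k2 * omegaRoot (2 * n) ^ k1) *
          (a k1 k2 - a (k1 - n) k2) := by

  intro k1 hk1 k2 hk2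
  simp only [Finset.mem_Icc] at hk1 hk2
  have hn2 : 2 * (n / 2) = n := by obtain ⟨r, hr⟩ := hne; omega
  have hωN : omegaRoot (2 * n) ≠ 0 := omegaRoot_ne_zero _
  have hωM : omegaRoot (2 * m) ≠ 0 := omegaRoot_ne_zero _
  rw [hinv k1 k2]
  rw [sum_even_odd n hn2 (fun ν1 => ∑ ν2 ∈ Finset.Icc (-m) (m - 1),
        atilhat ν1 ν2 * omegaRoot (2 * n) ^ (-(k1 * ν1)) * omegaRoot (2 * m) ^ (-(k2 * ν2)))]
  rw [mul_add]
  have hOdd : ((1 / Real.sqrt ((2 * m) * (2 * n)) : ℝ) : ℂ) *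
      (∑ μ ∈ Finset.Icc (-(n / 2)) (n / 2 - 1), ∑ ν2 ∈ Finset.Icc (-m) (m - 1),
        atilhat (2 * μ + 1) ν2 * omegaRoot (2 * n) ^ (-(k1 * (2 * μ + 1)))
          * omegaRoot (2 * m) ^ (-(k2 * ν2)))
      = (1 / 2 : ℂ) * (a k1 k2 - a (k1 - n) k2) := by
    simp only [hodd]
    exact odd_eval n m hn hm hn2 a ahat hhat k1 k2 hk1 hk2
  have hEven : ((1 / Real.sqrt ((2 * m) * (2 * n)) : ℝ) : ℂ) *
      (∑ μ ∈ Finset.Icc (-(n / 2)) (n / 2 - 1), ∑ ν2 ∈ Finset.Icc (-m) (m - 1),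
        atilhat (2 * μ) ν2 * omegaRoot (2 * n) ^ (-(k1 * (2 * μ)))
          * omegaRoot (2 * m) ^ (-(k2 * ν2)))
      = wcheck k1 k2 * omegaRoot (2 * n) ^ k1
          * ((1 / 2 : ℂ) * (a k1 k2 - a (k1 - n) k2)) := by
    simp only [heven]
    simp only [Finset.sum_mul]
    rw [sum_swap4 (Finset.Icc (-(n / 2)) (n / 2 - 1)) (Finset.Icc (-m) (m - 1))
      (Finset.Icc (-(n / 2)) (n / 2 - 1)) (Finset.Icc (-m) (m - 1))
      (fun μ ν2 l1 l2 => w (μ - l1) (ν2 - l2) * ahat (2 * l1 + 1) l2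
        * omegaRoot (2 * n) ^ (-(k1 * (2 * μ))) * omegaRoot (2 * m) ^ (-(k2 * ν2)))]
    have inner_eval : ∀ l1 ∈ Finset.Icc (-(n / 2)) (n / 2 - 1),
        ∀ l2 ∈ Finset.Icc (-m) (m - 1),
        (∑ μ ∈ Finset.Icc (-(n / 2)) (n / 2 - 1), ∑ ν2 ∈ Finset.Icc (-m) (m - 1),
          w (μ - l1) (ν2 - l2) * ahat (2 * l1 + 1) l2
            * omegaRoot (2 * n) ^ (-(k1 * (2 * μ))) * omegaRoot (2 * m) ^ (-(k2 * ν2)))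
          = wcheck k1 k2 * (ahat (2 * l1 + 1) l2
              * (omegaRoot (2 * n) ^ (-(2 * k1 * l1)) * omegaRoot (2 * m) ^ (-(k2 * l2)))) := by
      intro l1 _ l2 _
      have step : ∀ μ ν2 : ℤ,
          w (μ - l1) (ν2 - l2) * ahat (2 * l1 + 1) l2
              * omegaRoot (2 * n) ^ (-(k1 * (2 * μ))) * omegaRoot (2 * m) ^ (-(k2 * ν2))
            = (w (μ - l1) (ν2 - l2) * omegaRoot (2 * n) ^ (-(2 * k1 * (μ - l1)))
                * omegaRoot (2 * m) ^ (-(k2 * (ν2 - l2))))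
              * (ahat (2 * l1 + 1) l2
                * (omegaRoot (2 * n) ^ (-(2 * k1 * l1)) * omegaRoot (2 * m) ^ (-(k2 * l2)))) := by
        intro μ ν2
        rw [show -(k1 * (2 * μ)) = -(2 * k1 * (μ - l1)) + -(2 * k1 * l1) by ring,
            show -(k2 * ν2) = -(k2 * (ν2 - l2)) + -(k2 * l2) by ring,
            zpow_add₀ hωN, zpow_add₀ hωM]
        ring
      simp only [step]
      simp only [← Finset.sum_mul]
      rw [sum2_shift_period (fun x y => w x y * omegaRoot (2 * n) ^ (-(2 * k1 * x))
            * omegaRoot (2 * m) ^ (-(k2 * y))) n m hn hm hn2 ?_ ?_ l1 l2]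
      · rw [← hwcheck k1 k2]
      · intro x y
        have hw : w (x + n) y = w x y := by
          have := hper x y 1 0
          simpa using this
        show w (x + n) y * omegaRoot (2 * n) ^ (-(2 * k1 * (x + n)))
            * omegaRoot (2 * m) ^ (-(k2 * y))
          = w x y * omegaRoot (2 * n) ^ (-(2 * k1 * x)) * omegaRoot (2 * m) ^ (-(k2 * y))
        rw [hw, show -(2 * k1 * (x + n)) = -(2 * k1 * x) + (2 * n) * (-k1) by ring,
            zpow_add₀ hωN, (omegaRoot_zpow_eq_one_iff (show (2 * n : ℤ) ≠ 0 by omega)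
              ((2 * n) * (-k1))).2 ⟨-k1, rfl⟩, mul_one]
      · intro x y
        have hw : w x (y + 2 * m) = w x y := by
          have := hper x y 0 1
          simpa using this
        show w x (y + 2 * m) * omegaRoot (2 * n) ^ (-(2 * k1 * x))
            * omegaRoot (2 * m) ^ (-(k2 * (y + 2 * m)))
          = w x y * omegaRoot (2 * n) ^ (-(2 * k1 * x)) * omegaRoot (2 * m) ^ (-(k2 * y))
        rw [hw, show -(k2 * (y + 2 * m)) = -(k2 * y) + (2 * m) * (-k2) by ring,
            zpow_add₀ hωM, (omegaRoot_zpow_eq_one_iff (show (2 * m : ℤ) ≠ 0 by omega)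
              ((2 * m) * (-k2))).2 ⟨-k2, rfl⟩, mul_one]
    rw [Finset.sum_congr rfl (fun l1 h1 => Finset.sum_congr rfl
      (fun l2 h2 => inner_eval l1 h1 l2 h2))]
    have point2 : ∀ l1 l2 : ℤ,
        wcheck k1 k2 * (ahat (2 * l1 + 1) l2
            * (omegaRoot (2 * n) ^ (-(2 * k1 * l1)) * omegaRoot (2 * m) ^ (-(k2 * l2))))
          = (wcheck k1 k2 * omegaRoot (2 * n) ^ k1)
              * (ahat (2 * l1 + 1) l2 * omegaRoot (2 * n) ^ (-(k1 * (2 * l1 + 1)))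
                * omegaRoot (2 * m) ^ (-(k2 * l2))) := by
      intro l1 l2
      rw [show -(2 * k1 * l1) = -(k1 * (2 * l1 + 1)) + k1 by ring, zpow_add₀ hωN]
      ring
    simp only [point2]
    simp only [← Finset.mul_sum]
    rw [show ((1 / Real.sqrt ((2 * m) * (2 * n)) : ℝ) : ℂ) *
        ((wcheck k1 k2 * omegaRoot (2 * n) ^ k1) *
          ∑ l1 ∈ Finset.Icc (-(n / 2)) (n / 2 - 1), ∑ l2 ∈ Finset.Icc (-m) (m - 1),
            ahat (2 * l1 + 1) l2 * omegaRoot (2 * n) ^ (-(k1 * (2 * l1 + 1)))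
              * omegaRoot (2 * m) ^ (-(k2 * l2)))
        = (wcheck k1 k2 * omegaRoot (2 * n) ^ k1) *
          (((1 / Real.sqrt ((2 * m) * (2 * n)) : ℝ) : ℂ) *
            ∑ l1 ∈ Finset.Icc (-(n / 2)) (n / 2 - 1), ∑ l2 ∈ Finset.Icc (-m) (m - 1),
              ahat (2 * l1 + 1) l2 * omegaRoot (2 * n) ^ (-(k1 * (2 * l1 + 1)))
                * omegaRoot (2 * m) ^ (-(k2 * l2))) by ring]
    rw [odd_eval n m hn hm hn2 a ahat hhat k1 k2 hk1 hk2]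
  rw [hEven, hOdd]
  ring
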